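/- arXiv:math/0608749 — 2 statements merged into one kernel-verified Lean document; each statement's English description precedes it below -/
import Mathlib

section
/- Let V, W be finite-dimensional real vector spaces and T₁,…,T_κ : V → W linear maps such that every nonzero linear combination a₁T₁ + … + a_κT_κ has rank at least μ. If μ ≥ 2κ, then there exist x, y ∈ V such that T₁x,…,T_κx,T₁y,…,T_κy are 2κ linearly independent vectors. -/
/-!
On `V × V` let `S_j` run through the `2κ` maps `(x, y) ↦ Tᵢ x` and `(x, y) ↦ Tᵢ y`; every
nonzero linear combination of them has rank at least `2κ`. Pick `e` for which the vectors `S_j e`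
span a space of maximal dimension. If they were dependent, say `∑ c_j S_j e = 0` with `c ≠ 0`,
then for every `e'` maximality along the line `e + t e'`, together with the fact that a slightly
perturbed independent family stays independent, forces `∑ c_j S_j e' ∈ span {S_j e}`. So the
range of `∑ c_j S_j` would have dimension less than `2κ`.
-/

open Module LinearMap Filter Topology

section MaximalRank

variable {𝕜 W : Type*} [NontriviallyNormedField 𝕜] [CompleteSpace 𝕜]
  [AddCommGroup W] [Module 𝕜 W] [FiniteDimensional 𝕜 W]

theorem LinearIndependent.eventually_add_smul {ι : Type*} [Finite ι] {f₀ : ι → W}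
    (hf₀ : LinearIndependent 𝕜 f₀) (f₁ : ι → W) :
    ∀ᶠ t in 𝓝 (0 : 𝕜), LinearIndependent 𝕜 (f₀ + t • f₁) := by
  let e := (Module.finBasis 𝕜 W).equivFun
  have hcont : Continuous fun (t : 𝕜) j => e (f₀ j) + t • e (f₁ j) := by fun_prop
  have hlim : Tendsto (fun (t : 𝕜) j => e (f₀ j) + t • e (f₁ j)) (𝓝 0) (𝓝 (e ∘ f₀)) := by
    simpa [Function.comp_def] using hcont.tendsto 0
  filter_upwards [hlim.eventually (hf₀.map' e.toLinearMap e.ker).eventually] with t ht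
  have hfam : (fun j => e (f₀ j) + t • e (f₁ j)) = e ∘ (f₀ + t • f₁) := by
    ext j
    simp
  exact .of_comp e.toLinearMap (hfam ▸ ht)

theorem LinearMap.apply_mem_range_of_mem_ker_of_finrank_range_add_smul_le {F : Type*}
    [AddCommGroup F] [Module 𝕜 F] {A B : F →ₗ[𝕜] W}
    (h : ∀ t : 𝕜, finrank 𝕜 (range (A + t • B)) ≤ finrank 𝕜 (range A))
    {c : F} (hc : c ∈ ker A) : B c ∈ range A := by
  by_contra hBc
  let b := Module.finBasis 𝕜 (range A)
  choose v hv using fun i => (b i).2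
  let f₀ : Fin (finrank 𝕜 (range A) + 1) → W := Fin.cons (B c) fun i => A (v i)
  let f₁ : Fin (finrank 𝕜 (range A) + 1) → W := Fin.cons 0 fun i => B (v i)
  have hf₀ : LinearIndependent 𝕜 f₀ := by
    refine linearIndependent_finCons.2 ⟨?_, fun hspan => hBc ?_⟩
    · have hAv : (fun i => A (v i)) = Subtype.val ∘ b := funext hv
      rw [hAv]
      exact b.linearIndependent.map' (range A).subtype (Submodule.ker_subtype _)
    · exact Submodule.span_le.2 (Set.range_subset_iff.2 fun i => mem_range_self A (v i)) hspan
  have hnear : ∀ᶠ t in 𝓝[≠] (0 : 𝕜), LinearIndependent 𝕜 (f₀ + t • f₁) ∧ t ≠ 0 :=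
    ((hf₀.eventually_add_smul f₁).filter_mono nhdsWithin_le_nhds).and self_mem_nhdsWithin
  obtain ⟨t, hli, ht⟩ := hnear.exists
  have hmem : ∀ j, (f₀ + t • f₁) j ∈ range (A + t • B) := by
    refine Fin.cases ⟨t⁻¹ • c, ?_⟩ fun i => ⟨v i, ?_⟩
    · simp [f₀, f₁, LinearMap.mem_ker.1 hc, smul_smul, ht]
    · simp [f₀, f₁]
  have hle := (linearIndependent_iff_card_le_finrank_span.1 hli).trans
    (Submodule.finrank_mono (Submodule.span_le.2 (Set.range_subset_iff.2 hmem)))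
  rw [Fintype.card_fin] at hle
  exact Nat.not_succ_le_self _ (hle.trans (h t))

theorem exists_linearIndependent_apply_of_le_finrank_range {E ι : Type*} [AddCommGroup E]
    [Module 𝕜 E] [Fintype ι] (S : ι → E →ₗ[𝕜] W)
    (hS : ∀ c : ι → 𝕜, c ≠ 0 → Fintype.card ι ≤ finrank 𝕜 (range (∑ j, c j • S j))) :
    ∃ e : E, LinearIndependent 𝕜 fun j => S j e := by
  let Φ : E → (ι → 𝕜) →ₗ[𝕜] W := fun e => Fintype.linearCombination 𝕜 fun j => S j e
  have hΦ : ∀ e c, Φ e c = (∑ j, c j • S j) e := fun e c => by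
    simp [Φ, Fintype.linearCombination_apply]
  have hΦ_add_smul : ∀ e₀ e (t : 𝕜), Φ e₀ + t • Φ e = Φ (e₀ + t • e) := fun e₀ e t => by
    ext
    simp [Φ, Fintype.linearCombination_apply, Finset.smul_sum, Finset.sum_add_distrib, smul_comm t]
  have hbdd : BddAbove (Set.range fun e => finrank 𝕜 (range (Φ e))) :=
    ⟨finrank 𝕜 W, Set.forall_mem_range.2 fun e => Submodule.finrank_le _⟩
  obtain ⟨e₀, he₀⟩ := Nat.sSup_mem (Set.range_nonempty _) hbdd
  have hmax : ∀ e, finrank 𝕜 (range (Φ e)) ≤ finrank 𝕜 (range (Φ e₀)) :=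
    fun e => (le_csSup hbdd ⟨e, rfl⟩).trans_eq he₀.symm
  by_contra hnot
  have hdep : ¬LinearIndependent 𝕜 fun j => S j e₀ := fun h => hnot ⟨e₀, h⟩
  obtain ⟨c, hc0, i, hi⟩ := Fintype.not_linearIndependent_iff.1 hdep
  have hrange : range (∑ j, c j • S j) ≤ range (Φ e₀) := by
    rintro _ ⟨e, rfl⟩
    rw [← hΦ]
    refine apply_mem_range_of_mem_ker_of_finrank_range_add_smul_le (fun t => ?_) hc0
    rw [hΦ_add_smul]
    exact hmax _
  have hlt : finrank 𝕜 (range (Φ e₀)) < Fintype.card ι := by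
    rw [Fintype.range_linearCombination]
    exact (finrank_range_le_card _).lt_of_ne fun h =>
      hdep (linearIndependent_iff_card_eq_finrank_span.2 h.symm)
  have hc : c ≠ 0 := fun h => hi (congrFun h i)
  exact absurd (hS c hc) (not_le.2 ((Submodule.finrank_mono hrange).trans_lt hlt))

end MaximalRank

section PairFamily

variable {V W ι : Type*} [AddCommGroup V] [AddCommGroup W] [Fintype ι]

theorem LinearMap.sum_smul_sumElim_comp_fst_snd {R : Type*} [CommRing R] [Module R V]
    [Module R W] (T : ι → V →ₗ[R] W) (c : ι ⊕ ι → R) :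
    ∑ j, c j • Sum.elim (fun i => T i ∘ₗ fst R V V) (fun i => T i ∘ₗ snd R V V) j =
      (∑ i, c (.inl i) • T i).coprod (∑ i, c (.inr i) • T i) := by
  ext x <;> simp [Fintype.sum_sum_type]

theorem LinearMap.le_finrank_range_sum_smul_sumElim_comp_fst_snd {K : Type*} [Field K]
    [Module K V] [Module K W] [FiniteDimensional K W] {μ : ℕ} (T : ι → V →ₗ[K] W)
    (hT : ∀ a : ι → K, a ≠ 0 → μ ≤ finrank K (range (∑ i, a i • T i)))
    {c : ι ⊕ ι → K} (hc : c ≠ 0) :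
    μ ≤ finrank K (range
      (∑ j, c j • Sum.elim (fun i => T i ∘ₗ fst K V V) (fun i => T i ∘ₗ snd K V V) j)) := by
  rw [sum_smul_sumElim_comp_fst_snd, range_coprod]
  by_cases hl : (fun i => c (.inl i)) = 0
  · have hr : (fun i => c (.inr i)) ≠ 0 := fun hr =>
      hc (funext fun j => j.rec (congrFun hl) (congrFun hr))
    exact (hT _ hr).trans (Submodule.finrank_mono le_sup_right)
  · exact (hT _ hl).trans (Submodule.finrank_mono le_sup_left)

end PairFamily

theorem stmt_6_general {V W : Type*} [AddCommGroup V] [Module ℝ V] [AddCommGroup W] [Module ℝ W]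
    [FiniteDimensional ℝ W]
    {κ μ : ℕ} (T : Fin κ → (V →ₗ[ℝ] W))
    (hrank : ∀ a : Fin κ → ℝ, a ≠ 0 →
      μ ≤ Module.finrank ℝ (LinearMap.range (∑ i, a i • T i)))
    (hμ : 2 * κ ≤ μ) :
    ∃ x y : V, LinearIndependent ℝ
      (Sum.elim (fun i : Fin κ => T i x) (fun i : Fin κ => T i y)) := by
  let S := Sum.elim (fun i => T i ∘ₗ fst ℝ V V) (fun i => T i ∘ₗ snd ℝ V V)
  obtain ⟨⟨x, y⟩, hxy⟩ := exists_linearIndependent_apply_of_le_finrank_range S fun c hc => by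
    rw [Fintype.card_sum, Fintype.card_fin, ← two_mul]
    exact hμ.trans (le_finrank_range_sum_smul_sumElim_comp_fst_snd T hrank hc)
  have hfam : Sum.elim (fun i => T i x) (fun i => T i y) = fun j => S j (x, y) := by
    ext (i | i) <;> rfl
  exact ⟨x, y, hfam ▸ hxy⟩

/-- If every nonzero linear combination of `T₁,…,T_κ` has rank at least `μ ≥ 2κ`,
then there are `x, y` with `T₁x,…,T_κx,T₁y,…,T_κy` linearly independent. -/
theorem stmt_6 {V W : Type*} [AddCommGroup V] [Module ℝ V] [AddCommGroup W] [Module ℝ W]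
    [FiniteDimensional ℝ V] [FiniteDimensional ℝ W]
    {κ μ : ℕ} (T : Fin κ → (V →ₗ[ℝ] W))
    (hrank : ∀ a : Fin κ → ℝ, a ≠ 0 →
      μ ≤ Module.finrank ℝ (LinearMap.range (∑ i, a i • T i)))
    (hμ : 2 * κ ≤ μ) :
    ∃ x y : V, LinearIndependent ℝ
      (Sum.elim (fun i : Fin κ => T i x) (fun i : Fin κ => T i y)) :=
  stmt_6_general T hrank hμ
end

section
/- Let {J₁,J₂,J₃} be a quaternion structure on (V,⟨·,·⟩), i.e., a Clifford family with J₁J₂ = J₃, let c₀,c₁,c₂,c₃ ∈ ℝ and R := c₀R₀ + c₁R_{J₁} + c₂R_{J₂} + c₃R_{J₃}. Then for any unit vector x, writing π_x for Span{x, J₁x}, the complex Jacobi operator 𝒥_R(π_x) = 𝒥_R(x) + 𝒥_R(J₁x) acts as (c₀+3c₁)·id on Span{x,J₁x}, as (2c₀+3c₂+3c₃)·id on Span{J₂x,J₃x}, and as 2c₀·id on the orthogonal complement of Span{x,J₁x,J₂x,J₃x}. -/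
/-!
For skew-symmetric `Ψ`, `R_Ψ(y,x,x,z) = 3⟪y,Ψx⟫⟪Ψx,z⟫`, so the Jacobi operator of `R_Ψ` at `x`
is `3` times the rank-one projection onto `Ψx`, while that of `R₀` at a unit `x` is
`id - ⟪·,x⟫x`. Adding the operators at `x` and `J₁x`, and using `J₁J₁x = -x`, `J₂J₁x = -J₃x`,
`J₃J₁x = J₂x`, gives `𝒥_R(π_x) = 2c₀·id + (3c₁ - c₀)·P + 3(c₂ + c₃)·P'`, where `P` and `P'` are
the orthogonal projections onto `Span{x,J₁x}` and `Span{J₂x,J₃x}`; these are orthogonal planes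
since `x, J₁x, J₂x, J₃x` are orthonormal.
-/

open RealInnerProductSpace

section

variable {V : Type*} [NormedAddCommGroup V] [InnerProductSpace ℝ V]

/-- The tensor `R₀`. -/
def canonicalCurvature (x y z t : V) : ℝ :=
  ⟪x, t⟫ * ⟪y, z⟫ - ⟪x, z⟫ * ⟪y, t⟫

/-- The tensor `R_Ψ`. -/
def skewCurvature (Ψ : V →ₗ[ℝ] V) (x y z t : V) : ℝ :=
  ⟪x, Ψ t⟫ * ⟪y, Ψ z⟫ - ⟪x, Ψ z⟫ * ⟪y, Ψ t⟫ - 2 * ⟪x, Ψ y⟫ * ⟪z, Ψ t⟫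

def quaternionCurvature (c₀ c₁ c₂ c₃ : ℝ) (J₁ J₂ J₃ : V →ₗ[ℝ] V) (x y z t : V) : ℝ :=
  c₀ * canonicalCurvature x y z t + c₁ * skewCurvature J₁ x y z t +
    c₂ * skewCurvature J₂ x y z t + c₃ * skewCurvature J₃ x y z t

theorem inner_apply_right_eq_neg_of_isometry_of_sq {J : V →ₗ[ℝ] V}
    (hiso : ∀ a b : V, ⟪J a, J b⟫ = ⟪a, b⟫) (hsq : J ∘ₗ J = -LinearMap.id) (a b : V) :
    ⟪a, J b⟫ = -⟪J a, b⟫ := by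
  rw [← hiso a (J b), ← LinearMap.comp_apply, hsq, LinearMap.neg_apply, LinearMap.id_apply,
    inner_neg_right]

theorem inner_apply_self_eq_zero_of_skew {J : V →ₗ[ℝ] V} (hJ : ∀ a b : V, ⟪a, J b⟫ = -⟪J a, b⟫)
    (a : V) : ⟪J a, a⟫ = 0 := by
  linarith [hJ a a, real_inner_comm a (J a)]

theorem apply_apply_eq_neg_of_anticomm {J K : V →ₗ[ℝ] V} (hJK : J ∘ₗ K + K ∘ₗ J = 0) (a : V) :
    K (J a) = -J (K a) :=
  eq_neg_of_add_eq_zero_right (LinearMap.congr_fun hJK a)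

theorem inner_apply_apply_eq_zero_of_anticomm {J K : V →ₗ[ℝ] V}
    (hJ : ∀ a b : V, ⟪a, J b⟫ = -⟪J a, b⟫) (hK : ∀ a b : V, ⟪a, K b⟫ = -⟪K a, b⟫)
    (hJK : J ∘ₗ K + K ∘ₗ J = 0) (a : V) : ⟪J a, K a⟫ = 0 := by
  have h : ⟪J a, K a⟫ = -⟪K a, J a⟫ := by
    rw [hK, apply_apply_eq_neg_of_anticomm hJK, inner_neg_left, neg_neg, hJ (K a) a, neg_neg]
  linarith [real_inner_comm (J a) (K a)]

theorem inner_smul_add_inner_smul_eq_self_of_mem_span_pair {u v y : V} (hu : ⟪u, u⟫ = 1)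
    (hv : ⟪v, v⟫ = 1) (huv : ⟪u, v⟫ = 0) (hy : y ∈ Submodule.span ℝ ({u, v} : Set V)) :
    ⟪y, u⟫ • u + ⟪y, v⟫ • v = y := by
  obtain ⟨a, b, rfl⟩ := Submodule.mem_span_pair.mp hy
  simp only [inner_add_left, real_inner_smul_left, hu, hv, huv, real_inner_comm u v]
  module

theorem inner_eq_zero_of_mem_span_pair {u v w y : V} (hy : y ∈ Submodule.span ℝ ({u, v} : Set V))
    (hu : ⟪u, w⟫ = 0) (hv : ⟪v, w⟫ = 0) : ⟪y, w⟫ = 0 := by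
  obtain ⟨a, b, rfl⟩ := Submodule.mem_span_pair.mp hy
  simp [inner_add_left, real_inner_smul_left, hu, hv]

theorem canonicalCurvature_jacobi (x y z : V) :
    canonicalCurvature y x x z = ⟪⟪x, x⟫ • y - ⟪y, x⟫ • x, z⟫ := by
  rw [canonicalCurvature, inner_sub_left, real_inner_smul_left, real_inner_smul_left]
  ring

theorem skewCurvature_jacobi {Ψ : V →ₗ[ℝ] V} (hΨ : ∀ a b : V, ⟪a, Ψ b⟫ = -⟪Ψ a, b⟫)
    (x y z : V) : skewCurvature Ψ y x x z = ⟪(3 * ⟪y, Ψ x⟫) • Ψ x, z⟫ := by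
  rw [skewCurvature, real_inner_smul_left, hΨ x x, real_inner_comm,
    inner_apply_self_eq_zero_of_skew hΨ, hΨ x z]
  ring

theorem quaternionCurvature_jacobi_add_jacobi {c₀ c₁ c₂ c₃ : ℝ} {J₁ J₂ J₃ : V →ₗ[ℝ] V}
    (hJ₁ : ∀ a b : V, ⟪a, J₁ b⟫ = -⟪J₁ a, b⟫) (hJ₂ : ∀ a b : V, ⟪a, J₂ b⟫ = -⟪J₂ a, b⟫)
    (hJ₃ : ∀ a b : V, ⟪a, J₃ b⟫ = -⟪J₃ a, b⟫) (hsq₁ : J₁ ∘ₗ J₁ = -LinearMap.id)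
    (hanti₁₂ : J₁ ∘ₗ J₂ + J₂ ∘ₗ J₁ = 0) (hanti₁₃ : J₁ ∘ₗ J₃ + J₃ ∘ₗ J₁ = 0)
    (hquat : J₁ ∘ₗ J₂ = J₃) {x : V} (hx : ⟪x, x⟫ = 1) (y z : V) :
    quaternionCurvature c₀ c₁ c₂ c₃ J₁ J₂ J₃ y x x z +
        quaternionCurvature c₀ c₁ c₂ c₃ J₁ J₂ J₃ y (J₁ x) (J₁ x) z =
      ⟪(2 * c₀) • y + (3 * c₁ - c₀) • (⟪y, x⟫ • x + ⟪y, J₁ x⟫ • J₁ x) +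
        (3 * c₂ + 3 * c₃) • (⟪y, J₂ x⟫ • J₂ x + ⟪y, J₃ x⟫ • J₃ x), z⟫ := by
  have h₁₁ (a : V) : J₁ (J₁ a) = -a := by simpa using LinearMap.congr_fun hsq₁ a
  have h₂₁ : J₂ (J₁ x) = -J₃ x := by
    rw [apply_apply_eq_neg_of_anticomm hanti₁₂, ← LinearMap.comp_apply, hquat]
  have h₃₁ : J₃ (J₁ x) = J₂ x := by
    rw [apply_apply_eq_neg_of_anticomm hanti₁₃, ← hquat, LinearMap.comp_apply, h₁₁, neg_neg]
  have hx₁ : ⟪J₁ x, J₁ x⟫ = 1 := by rw [hJ₁, h₁₁, inner_neg_left, neg_neg, hx]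
  simp only [quaternionCurvature, canonicalCurvature_jacobi, skewCurvature_jacobi hJ₁,
    skewCurvature_jacobi hJ₂, skewCurvature_jacobi hJ₃, h₁₁, h₂₁, h₃₁, hx, hx₁, inner_add_left,
    inner_sub_left, real_inner_smul_left, inner_neg_left, inner_neg_right, one_smul]
  ring

end

/-- For `R = c₀R₀ + c₁R_{J₁} + c₂R_{J₂} + c₃R_{J₃}` with `{J₁,J₂,J₃}` a
quaternion structure, the complex Jacobi operator of `π_x = Span{x,J₁x}`
(characterized by `⟪𝒥_R(π_x)y, z⟫ = R(y,x,x,z) + R(y,J₁x,J₁x,z)`) acts as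
`(c₀+3c₁)·id` on `Span{x,J₁x}`, as `(2c₀+3c₂+3c₃)·id` on `Span{J₂x,J₃x}`, and
as `2c₀·id` on the orthogonal complement of `Span{x,J₁x,J₂x,J₃x}`. -/
theorem stmt_16 {V : Type*} [NormedAddCommGroup V] [InnerProductSpace ℝ V]
    (J₁ J₂ J₃ : V →ₗ[ℝ] V)
    (hiso₁ : ∀ x y : V, ⟪J₁ x, J₁ y⟫ = ⟪x, y⟫)
    (hiso₂ : ∀ x y : V, ⟪J₂ x, J₂ y⟫ = ⟪x, y⟫)
    (hiso₃ : ∀ x y : V, ⟪J₃ x, J₃ y⟫ = ⟪x, y⟫)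
    (hsq₁ : J₁ ∘ₗ J₁ = -LinearMap.id) (hsq₂ : J₂ ∘ₗ J₂ = -LinearMap.id)
    (hsq₃ : J₃ ∘ₗ J₃ = -LinearMap.id)
    (hanti₁₂ : J₁ ∘ₗ J₂ + J₂ ∘ₗ J₁ = 0) (hanti₁₃ : J₁ ∘ₗ J₃ + J₃ ∘ₗ J₁ = 0)
    (hanti₂₃ : J₂ ∘ₗ J₃ + J₃ ∘ₗ J₂ = 0)
    (hquat : J₁ ∘ₗ J₂ = J₃)
    (c₀ c₁ c₂ c₃ : ℝ) (R : V → V → V → V → ℝ)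
    (hR : ∀ x y z t : V, R x y z t =
      c₀ * (⟪x, t⟫ * ⟪y, z⟫ - ⟪x, z⟫ * ⟪y, t⟫) +
      c₁ * (⟪x, J₁ t⟫ * ⟪y, J₁ z⟫ - ⟪x, J₁ z⟫ * ⟪y, J₁ t⟫ - 2 * ⟪x, J₁ y⟫ * ⟪z, J₁ t⟫) +
      c₂ * (⟪x, J₂ t⟫ * ⟪y, J₂ z⟫ - ⟪x, J₂ z⟫ * ⟪y, J₂ t⟫ - 2 * ⟪x, J₂ y⟫ * ⟪z, J₂ t⟫) +
      c₃ * (⟪x, J₃ t⟫ * ⟪y, J₃ z⟫ - ⟪x, J₃ z⟫ * ⟪y, J₃ t⟫ - 2 * ⟪x, J₃ y⟫ * ⟪z, J₃ t⟫))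
    (x : V) (hx : ‖x‖ = 1) :
    (∀ y ∈ Submodule.span ℝ ({x, J₁ x} : Set V), ∀ z : V,
      R y x x z + R y (J₁ x) (J₁ x) z = ⟪((c₀ + 3 * c₁) • y : V), z⟫) ∧
    (∀ y ∈ Submodule.span ℝ ({J₂ x, J₃ x} : Set V), ∀ z : V,
      R y x x z + R y (J₁ x) (J₁ x) z = ⟪((2 * c₀ + 3 * c₂ + 3 * c₃) • y : V), z⟫) ∧
    (∀ y : V, ⟪y, x⟫ = 0 → ⟪y, J₁ x⟫ = 0 → ⟪y, J₂ x⟫ = 0 → ⟪y, J₃ x⟫ = 0 → ∀ z : V,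
      R y x x z + R y (J₁ x) (J₁ x) z = ⟪((2 * c₀) • y : V), z⟫) := by
  have hJ₁ := inner_apply_right_eq_neg_of_isometry_of_sq hiso₁ hsq₁
  have hJ₂ := inner_apply_right_eq_neg_of_isometry_of_sq hiso₂ hsq₂
  have hJ₃ := inner_apply_right_eq_neg_of_isometry_of_sq hiso₃ hsq₃
  have hxx : ⟪x, x⟫ = 1 := by rw [real_inner_self_eq_norm_sq, hx, one_pow]
  have hx₁ : ⟪x, J₁ x⟫ = 0 := by rw [real_inner_comm, inner_apply_self_eq_zero_of_skew hJ₁]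
  have hx₂ : ⟪x, J₂ x⟫ = 0 := by rw [real_inner_comm, inner_apply_self_eq_zero_of_skew hJ₂]
  have hx₃ : ⟪x, J₃ x⟫ = 0 := by rw [real_inner_comm, inner_apply_self_eq_zero_of_skew hJ₃]
  have h₁₂ := inner_apply_apply_eq_zero_of_anticomm hJ₁ hJ₂ hanti₁₂ x
  have h₁₃ := inner_apply_apply_eq_zero_of_anticomm hJ₁ hJ₃ hanti₁₃ x
  have h₂₃ := inner_apply_apply_eq_zero_of_anticomm hJ₂ hJ₃ hanti₂₃ x
  obtain rfl : R = quaternionCurvature c₀ c₁ c₂ c₃ J₁ J₂ J₃ :=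
    funext fun a => funext fun b => funext fun c => funext fun d => hR a b c d
  simp only [quaternionCurvature_jacobi_add_jacobi hJ₁ hJ₂ hJ₃ hsq₁ hanti₁₂ hanti₁₃ hquat hxx]
  refine ⟨fun y hy z => ?_, fun y hy z => ?_, fun y h₀ h₁ h₂ h₃ z => ?_⟩
  · rw [inner_smul_add_inner_smul_eq_self_of_mem_span_pair hxx ((hiso₁ x x).trans hxx) hx₁ hy,
      inner_eq_zero_of_mem_span_pair hy hx₂ h₁₂, inner_eq_zero_of_mem_span_pair hy hx₃ h₁₃]
    congr 1
    module
  · rw [inner_smul_add_inner_smul_eq_self_of_mem_span_pair ((hiso₂ x x).trans hxx)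
        ((hiso₃ x x).trans hxx) h₂₃ hy,
      inner_eq_zero_of_mem_span_pair hy (inner_apply_self_eq_zero_of_skew hJ₂ x)
        (inner_apply_self_eq_zero_of_skew hJ₃ x),
      inner_eq_zero_of_mem_span_pair hy (by rwa [real_inner_comm]) (by rwa [real_inner_comm])]
    congr 1
    module
  · rw [h₀, h₁, h₂, h₃]
    congr 1
    module
end
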